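/- arXiv:2107.04492 — 6 statements merged into one kernel-verified Lean document; each statement's English description precedes it below -/
import Mathlib

section
/- The monoid M generated by I = [[1,1],[0,0]] and J = [[1,0],[0,α]] over a commutative unital semiring S with α of infinite multiplicative order satisfies the semigroup identity xyzxty = yxzxty: for all A, B, C, D ∈ M, A·B·C·A·D·B = B·A·C·A·D·B. -/
/-- The monoid M generated by I = [[1,1],[0,0]] and
J = [[1,0],[0,α]] over a commutative unital semiring S, with α of infinite
multiplicative order, satisfies the identity xyzxty = yxzxty. -/
theorem stmt_5 (S : Type*) [CommSemiring S] (α : S)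
    (hα : ∀ k l : ℕ, α ^ k = α ^ l → k = l)
    (I J : Matrix (Fin 2) (Fin 2) S)
    (hI : I = !![1, 1; 0, 0])
    (hJ : J = !![1, 0; 0, α]) :
    ∀ A ∈ Submonoid.closure ({I, J} : Set (Matrix (Fin 2) (Fin 2) S)),
    ∀ B ∈ Submonoid.closure ({I, J} : Set (Matrix (Fin 2) (Fin 2) S)),
    ∀ C ∈ Submonoid.closure ({I, J} : Set (Matrix (Fin 2) (Fin 2) S)),
    ∀ D ∈ Submonoid.closure ({I, J} : Set (Matrix (Fin 2) (Fin 2) S)),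
      A * B * C * A * D * B = B * A * C * A * D * B := by
  set P : Matrix (Fin 2) (Fin 2) S → Prop := fun M =>
    (∃ k : ℕ, M = !![1, 0; 0, α ^ k]) ∨ ∃ k : ℕ, M = !![1, α ^ k; 0, 0] with hP
  have h0 : ![(0:S), 0] = 0 := by funext i; fin_cases i <;> rfl
  have hmul : ∀ M N, P M → P N → P (M * N) := by
    rintro M N (⟨k, rfl⟩ | ⟨k, rfl⟩) (⟨l, rfl⟩ | ⟨l, rfl⟩)
    · exact Or.inl ⟨k + l, by simp [Matrix.mul_fin_two, pow_add, h0]⟩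
    · exact Or.inr ⟨l, by simp [Matrix.mul_fin_two, h0]⟩
    · exact Or.inr ⟨k + l, by simp [Matrix.mul_fin_two, pow_add, h0]⟩
    · exact Or.inr ⟨l, by simp [Matrix.mul_fin_two, h0]⟩
  have hcl : ∀ M ∈ Submonoid.closure ({I, J} : Set (Matrix (Fin 2) (Fin 2) S)), P M := by
    intro M hM
    induction hM using Submonoid.closure_induction with
    | mem x hx =>
      rcases hx with rfl | rfl
      · exact Or.inr ⟨0, by simp [hI]⟩
      · exact Or.inl ⟨1, by simp [hJ]⟩
    | one => exact Or.inl ⟨0, by simp [Matrix.one_fin_two]⟩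
    | mul x y _ _ hx hy => exact hmul _ _ hx hy
  -- absorption: X * (I Jᵇ) = I Jᵇ for any X in the monoid
  have habs : ∀ X, P X → ∀ b : ℕ, X * !![1, α ^ b; 0, 0] = !![1, α ^ b; 0, 0] := by
    rintro X (⟨k, rfl⟩ | ⟨k, rfl⟩) b <;> simp [Matrix.mul_fin_two, h0]
  intro A hA B hB C hC D hD
  have PA := hcl A hA
  have PC := hcl C hC
  have PD := hcl D hD
  rcases hcl B hB with ⟨b, rfl⟩ | ⟨b, rfl⟩
  · -- B = Jᵇ diagonal: show A*B*C*A = B*A*C*A then done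
    have key : A * !![1, 0; 0, α ^ b] * C * A = !![1, 0; 0, α ^ b] * A * C * A := by
      rcases PA with ⟨a, rfl⟩ | ⟨a, rfl⟩
      · have : !![1, 0; 0, (α:S) ^ a] * !![1, 0; 0, α ^ b]
            = !![1, 0; 0, α ^ b] * !![1, 0; 0, α ^ a] := by
          simp [Matrix.mul_fin_two, mul_comm]
        rw [this]
      · rcases PC with ⟨c, rfl⟩ | ⟨c, rfl⟩
        · simp [Matrix.mul_fin_two, h0, mul_assoc, mul_comm, mul_left_comm]
        · rw [habs _ (hmul _ _ (Or.inr ⟨a, rfl⟩) (Or.inl ⟨b, rfl⟩)) c,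
            habs _ (hmul _ _ (Or.inl ⟨b, rfl⟩) (Or.inr ⟨a, rfl⟩)) c]
    rw [key]
  · -- B = I Jᵇ: everything gets absorbed
    have PB : P !![1, α ^ b; 0, 0] := Or.inr ⟨b, rfl⟩
    rw [habs _ (hmul _ _ (hmul _ _ (hmul _ _ (hmul _ _ PA PB) PC) PA) PD) b,
      habs _ (hmul _ _ (hmul _ _ (hmul _ _ (hmul _ _ PB PA) PC) PA) PD) b]
end

section
/- Define the stalactic congruence on the free monoid [n]* by: u ≡ v iff u and v have the same content (same number of occurrences of each letter) and for all i ≠ j in [n], u factors as u'·i·u'' with j ∈ supp(u'') and i ∉ supp(u'') if and only if v factors analogously. The map sending each letter i to the corresponding diagonal matrix (recording content) together with the maps s_{ij} (sending i ↦ I = [[1,1],[0,0]], j ↦ J = [[1,0],[0,0]], other letters ↦ identity) gives an injective monoid homomorphism from the stalactic monoid of rank n into a direct product of n copies of (ℕ₀, +) and n(n-1)/2 copies of the flip-flop monoid F = {E, I, J}. -/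
/-!
The content component of `Φ w` records the letter counts. For `i ≠ j`, since `I` and `J` are
right zeros of the flip-flop monoid, the `(i, j)` component only sees which of `i`, `j` occurs
last in `w`, and it records this faithfully. For words with the same support, knowing which of
`i`, `j` occurs last for every pair is the same as knowing whether the last `i` is followed by
a `j` for every pair.
-/

theorem List.prod_eq_getLast?_getD {M : Type*} [Monoid M] {l : List M}
    (h : ∀ x ∈ l, ∀ y ∈ l, x * y = y) : l.prod = l.getLast?.getD 1 := by
  induction l with
  | nil => rfl
  | cons a l ih =>
    rw [List.prod_cons, ih fun x hx y hy => h x (.tail a hx) y (.tail a hy), List.getLast?_cons]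
    cases hl : l.getLast? with
    | none => simp
    | some b => exact h a (.head l) b (.tail a (List.mem_of_getLast? hl))

theorem List.prod_map_filter_of_eq_one {α M : Type*} [Monoid M] (p : α → Prop) [DecidablePred p]
    {f : α → M} (hf : ∀ a, ¬p a → f a = 1) (l : List α) :
    ((l.filter p).map f).prod = (l.map f).prod := by
  induction l with
  | nil => rfl
  | cons a l ih => by_cases ha : p a <;> simp [ha, hf, ih]

theorem List.exists_eq_append_cons_notMem {α : Type*} {a : α} {l : List α} (h : a ∈ l) :
    ∃ s t, l = s ++ a :: t ∧ a ∉ t := by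
  obtain ⟨s, t, hl, ha⟩ := List.eq_append_cons_of_mem (List.mem_reverse.mpr h)
  exact ⟨t.reverse, s.reverse, by simpa using congrArg List.reverse hl, by simpa using ha⟩

theorem forall_pair_lt_iff_forall_ne {α : Type*} [LinearOrder α] {R : α → α → Prop}
    (hR : ∀ i j, R i j → R j i) :
    (∀ p : {p : α × α // p.1 < p.2}, R p.1.1 p.1.2) ↔ ∀ i j, i ≠ j → R i j := by
  refine ⟨fun h i j hij => ?_, fun h p => h _ _ p.2.ne⟩
  rcases hij.lt_or_gt with hlt | hlt
  · exact h ⟨(i, j), hlt⟩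
  · exact hR _ _ (h ⟨(j, i), hlt⟩)

namespace Stalactic

variable {α : Type*} [DecidableEq α]

def LastFollowedBy (i j : α) (w : List α) : Prop :=
  ∃ w' w'', w = w' ++ i :: w'' ∧ j ∈ w'' ∧ i ∉ w''

def lastOf (i j : α) (w : List α) : Option α :=
  (w.filter fun a => a = i ∨ a = j).getLast?

variable {i j a : α} {w : List α}

lemma lastOf_comm (i j : α) (w : List α) : lastOf i j w = lastOf j i w := by
  simp only [lastOf, or_comm]

lemma mem_of_lastOf_eq_some (h : lastOf i j w = some a) : a ∈ w ∧ (a = i ∨ a = j) := by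
  simpa using List.mem_of_getLast? h

lemma lastOf_eq_none_iff : lastOf i j w = none ↔ i ∉ w ∧ j ∉ w := by
  simp only [lastOf, List.getLast?_eq_none_iff, List.filter_eq_nil_iff]
  grind

lemma lastOf_of_notMem (hi : i ∉ w) : lastOf i j w = if j ∈ w then some j else none := by
  split_ifs with hj
  · cases h : lastOf i j w with
    | none => exact absurd hj (lastOf_eq_none_iff.mp h).2
    | some a =>
      obtain ⟨ha, rfl | rfl⟩ := mem_of_lastOf_eq_some h
      exacts [absurd ha hi, rfl]
  · exact lastOf_eq_none_iff.mpr ⟨hi, hj⟩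

lemma lastOf_append_cons (w' : List α) {w'' : List α} (hi : i ∉ w'') :
    lastOf i j (w' ++ i :: w'') = if j ∈ w'' then some j else some i := by
  have := lastOf_of_notMem (j := j) hi
  simp only [lastOf] at this ⊢
  rw [List.filter_append, List.getLast?_append, List.filter_cons_of_pos (by simp),
    List.getLast?_cons, this]
  split_ifs <;> rfl

lemma lastFollowedBy_iff (hij : i ≠ j) :
    LastFollowedBy i j w ↔ i ∈ w ∧ lastOf i j w = some j := by
  constructor
  · rintro ⟨w', w'', rfl, hj, hi⟩
    simp [lastOf_append_cons w' hi, hj]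
  · rintro ⟨hi, hlast⟩
    obtain ⟨w', w'', rfl, hi''⟩ := List.exists_eq_append_cons_notMem hi
    rw [lastOf_append_cons w' hi''] at hlast
    split_ifs at hlast with hj
    exacts [⟨w', w'', rfl, hj, hi''⟩, absurd (Option.some_inj.mp hlast) hij]

lemma lastOf_eq_some_right_iff (hij : i ≠ j) :
    lastOf i j w = some j ↔ j ∈ w ∧ (i ∈ w → LastFollowedBy i j w) := by
  refine ⟨fun h => ⟨(mem_of_lastOf_eq_some h).1,
    fun hi => (lastFollowedBy_iff hij).mpr ⟨hi, h⟩⟩, fun ⟨hj, hP⟩ => ?_⟩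
  by_cases hi : i ∈ w
  · exact ((lastFollowedBy_iff hij).mp (hP hi)).2
  · simp [lastOf_of_notMem hi, hj]

lemma forall_lastOf_eq_iff {u v : List α} (hmem : ∀ x, x ∈ u ↔ x ∈ v) :
    (∀ i j : α, i ≠ j → lastOf i j u = lastOf i j v) ↔
      ∀ i j : α, i ≠ j → (LastFollowedBy i j u ↔ LastFollowedBy i j v) := by
  refine ⟨fun h i j hij => ?_, fun hP i j hij => ?_⟩
  · rw [lastFollowedBy_iff hij, lastFollowedBy_iff hij, h i j hij, hmem]
  have right {i j : α} (hij : i ≠ j) (h : lastOf i j u = some j) : lastOf i j v = some j := by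
    rw [lastOf_eq_some_right_iff hij] at h ⊢
    exact ⟨(hmem j).mp h.1, fun hi => (hP i j hij).mp (h.2 ((hmem i).mpr hi))⟩
  cases h : lastOf i j u with
  | none =>
    rw [lastOf_eq_none_iff, hmem, hmem] at h
    exact (lastOf_eq_none_iff.mpr h).symm
  | some a =>
    obtain ⟨-, rfl | rfl⟩ := mem_of_lastOf_eq_some h
    · rw [lastOf_comm] at h ⊢
      exact (right hij.symm h).symm
    · exact (right hij h).symm

lemma prod_map_content_apply (w : List α) (x : α) :
    (w.map fun a => fun i => Multiplicative.ofAdd (if i = a then 1 else 0)).prod x =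
      Multiplicative.ofAdd (w.count x) := by
  induction w with
  | nil => rfl
  | cons a w ih =>
    rw [List.map_cons, List.prod_cons, Pi.mul_apply, ih, List.count_cons, ← ofAdd_add]
    by_cases h : x = a <;> simp [h, Ne.symm, add_comm]

def flipFlop (i j a : α) : Matrix (Fin 2) (Fin 2) ℕ :=
  if a = i then !![1, 1; 0, 0] else if a = j then !![1, 0; 0, 0] else 1

lemma flipFlop_mul_flipFlop (a : α) {b : α} (hb : b = i ∨ b = j) :
    flipFlop i j a * flipFlop i j b = flipFlop i j b := by
  unfold flipFlop
  split_ifs <;> first | decide | simp_all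

lemma prod_map_flipFlop (i j : α) (w : List α) :
    (w.map (flipFlop i j)).prod = ((lastOf i j w).map (flipFlop i j)).getD 1 := by
  rw [← List.prod_map_filter_of_eq_one (fun a => a = i ∨ a = j), List.prod_eq_getLast?_getD,
    List.getLast?_map, lastOf]
  · simp only [List.mem_map, List.mem_filter, decide_eq_true_eq]
    rintro _ ⟨a, -, rfl⟩ _ ⟨b, ⟨-, hb⟩, rfl⟩
    exact flipFlop_mul_flipFlop a hb
  · intro a ha
    simp [flipFlop, not_or.mp ha]

lemma prod_map_flipFlop_eq_iff (hij : i ≠ j) {u v : List α} :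
    (u.map (flipFlop i j)).prod = (v.map (flipFlop i j)).prod ↔ lastOf i j u = lastOf i j v := by
  refine ⟨fun h => ?_, fun h => by rw [prod_map_flipFlop, prod_map_flipFlop, h]⟩
  rw [prod_map_flipFlop, prod_map_flipFlop] at h
  have values (w : List α) :
      lastOf i j w = none ∨ lastOf i j w = some i ∨ lastOf i j w = some j := by
    cases hw : lastOf i j w with
    | none => exact .inl rfl
    | some a => obtain ⟨-, rfl | rfl⟩ := mem_of_lastOf_eq_some hw <;> simp
  rcases values u with hu | hu | hu <;> rcases values v with hv | hv | hv <;>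
    rw [hu, hv] at h ⊢ <;> simp [flipFlop, hij.symm] at h ⊢ <;> revert h <;> decide

end Stalactic

open Stalactic in
/-- The combined map Φ (recording content via diagonal/ℕ₀ data and
the flip-flop data s_{ij} for each pair i < j) is a monoid homomorphism from
the free monoid [n]* which identifies two words exactly when they are
stalactically congruent; that is, it induces an injective monoid homomorphism
from the stalactic monoid of rank n into the direct product of n copies of
(ℕ₀, +) with n(n-1)/2 copies of the flip-flop monoid F = {E, I, J}. -/
theorem stmt_7 (n : ℕ)
    (I J : Matrix (Fin 2) (Fin 2) ℕ)
    (hI : I = !![1, 1; 0, 0])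
    (hJ : J = !![1, 0; 0, 0])
    (c : List (Fin n) → (Fin n → Multiplicative ℕ))
    (hc : ∀ w, c w =
      (w.map (fun a => fun i => Multiplicative.ofAdd (if i = a then 1 else 0))).prod)
    (s : Fin n → Fin n → List (Fin n) → Matrix (Fin 2) (Fin 2) ℕ)
    (hs : ∀ i j w, s i j w =
      (w.map (fun a => if a = i then I else if a = j then J else 1)).prod)
    (Φ : List (Fin n) →
      ((Fin n → Multiplicative ℕ) ×
        ({p : Fin n × Fin n // p.1 < p.2} → Matrix (Fin 2) (Fin 2) ℕ)))
    (hΦ : ∀ w, Φ w = (c w, fun p => s p.1.1 p.1.2 w)) :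
    (Φ [] = 1) ∧
    (∀ u v : List (Fin n), Φ (u ++ v) = Φ u * Φ v) ∧
    (∀ u v : List (Fin n), Φ u = Φ v ↔
      ((∀ x : Fin n, u.count x = v.count x) ∧
       ∀ i j : Fin n, i ≠ j →
        ((∃ u' u'' : List (Fin n), u = u' ++ i :: u'' ∧ j ∈ u'' ∧ i ∉ u'') ↔
         (∃ v' v'' : List (Fin n), v = v' ++ i :: v'' ∧ j ∈ v'' ∧ i ∉ v'')))) := by
  subst hI hJ
  have hs' : ∀ i j w, s i j w = (w.map (flipFlop i j)).prod := hs
  refine ⟨by simp [hΦ, hc, hs, Prod.ext_iff, funext_iff], fun u v => ?_, fun u v => ?_⟩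
  · simp [hΦ, hc, hs, Prod.ext_iff, funext_iff]
  have hcontent : c u = c v ↔ ∀ x, u.count x = v.count x := by
    simp [funext_iff, hc, prod_map_content_apply]
  have hpairs : (∀ p : {p : Fin n × Fin n // p.1 < p.2}, s p.1.1 p.1.2 u = s p.1.1 p.1.2 v) ↔
      ∀ i j, i ≠ j → lastOf i j u = lastOf i j v := by
    rw [← forall_pair_lt_iff_forall_ne fun i j h => by rwa [lastOf_comm, lastOf_comm j i v]]
    exact forall_congr' fun p => by rw [hs', hs', prod_map_flipFlop_eq_iff p.2.ne]
  have hmem (hcount : ∀ x, u.count x = v.count x) (x : Fin n) : x ∈ u ↔ x ∈ v := by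
    rw [← List.count_pos_iff, ← List.count_pos_iff, hcount]
  rw [hΦ, hΦ, Prod.mk.injEq, funext_iff (f := fun p => s _ _ u), hcontent, hpairs]
  exact and_congr_right fun hcount => forall_lastOf_eq_iff (hmem hcount)
end

section
/- Let u, v ∈ [n]* be words. The stalactic tableaux P_stal(u) and P_stal(v) are equal if and only if (1) u and v have the same content, and (2) for all 1 ≤ i < j ≤ n, the statement S_{i,j}(u) holds iff S_{i,j}(v) holds, where S_{i,j}(w) means 'w factors as w'·i·w'' where w'' contains j but not i'. -/
/-!
Inserting right-to-left, the columns of `P_stal(w)` are the distinct letters of `w` ordered by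
their last occurrence, each with its number of occurrences; this is `w.dedup.map (·, w.count ·)`,
since `List.dedup` keeps last occurrences. `S_{i,j}(w)` says exactly that `i` precedes `j` in
`w.dedup`, i.e. `[i, j] <+ w.dedup`. A duplicate-free list is determined by its set of elements
together with the relative order of each pair, and for `i ≠ j` in the list the order of `(j, i)`
is the negation of that of `(i, j)`, so the pairs with `i < j` already suffice.
-/

/-- A stalactic tableau is represented as the list of its columns, from left to
right, each column being a pair (symbol, multiplicity).  Inserting a symbol `a`
adds a new column `(a,1)` on the left if `a` does not yet occur, and otherwise
increments the multiplicity of the column of `a`. -/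
def stalInsert {n : ℕ} (T : List (Fin n × ℕ)) (a : Fin n) : List (Fin n × ℕ) :=
  if T.any (fun col => col.1 = a) then
    T.map (fun col => if col.1 = a then (col.1, col.2 + 1) else col)
  else (a, 1) :: T

/-- The stalactic tableau of a word, computed by inserting its symbols
proceeding right-to-left through the word. -/
def stalTableau {n : ℕ} (w : List (Fin n)) : List (Fin n × ℕ) :=
  w.reverse.foldl stalInsert []

namespace List

variable {α : Type*}

theorem pair_sublist_cons_iff {a b x : α} {l : List α} :
    [a, b] <+ x :: l ↔ (x = a ∧ b ∈ l) ∨ [a, b] <+ l := by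
  rw [sublist_cons_iff, or_comm]
  simp [singleton_sublist, eq_comm]

theorem Nodup.pair_sublist_iff {a b : α} {l : List α} (hl : l.Nodup) :
    [a, b] <+ l ↔ a ∈ l ∧ b ∈ l ∧ a ≠ b ∧ ¬[b, a] <+ l := by
  induction l with
  | nil => simp
  | cons x l ih =>
    obtain ⟨hx, hl⟩ := nodup_cons.mp hl
    simp only [pair_sublist_cons_iff, mem_cons, ih hl]
    grind

theorem Nodup.eq_of_pair_sublist_iff {l₁ l₂ : List α} (h₁ : l₁.Nodup) (h₂ : l₂.Nodup)
    (hmem : ∀ a, a ∈ l₁ ↔ a ∈ l₂) (hpair : ∀ a b, [a, b] <+ l₁ ↔ [a, b] <+ l₂) : l₁ = l₂ := by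
  refine Perm.eq_of_pairwise (le := fun a b => [a, b] <+ l₁) ?_
    (pairwise_iff_forall_sublist.mpr id)
    (pairwise_iff_forall_sublist.mpr fun h => (hpair _ _).mpr h)
    ((perm_ext_iff_of_nodup h₁ h₂).mpr hmem)
  intro a b _ _ hab hba
  exact absurd hba (h₁.pair_sublist_iff.mp hab).2.2.2

theorem Nodup.eq_of_pair_sublist_iff_of_lt [LinearOrder α] {l₁ l₂ : List α} (h₁ : l₁.Nodup)
    (h₂ : l₂.Nodup) (hmem : ∀ a, a ∈ l₁ ↔ a ∈ l₂)
    (hpair : ∀ a b, a < b → ([a, b] <+ l₁ ↔ [a, b] <+ l₂)) : l₁ = l₂ := by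
  refine h₁.eq_of_pair_sublist_iff h₂ hmem fun a b => ?_
  rcases lt_or_ge a b with hab | hba
  · exact hpair a b hab
  · rw [h₁.pair_sublist_iff, h₂.pair_sublist_iff, hmem, hmem]
    rcases hba.lt_or_eq with hba | rfl
    · rw [hpair b a hba]
    · simp

theorem exists_cons_eq_append_cons_iff {a x : α} {l : List α} {p : List α → Prop} :
    (∃ l₁ l₂, x :: l = l₁ ++ a :: l₂ ∧ p l₂) ↔
      (x = a ∧ p l) ∨ ∃ l₁ l₂, l = l₁ ++ a :: l₂ ∧ p l₂ := by
  simp only [cons_eq_append_iff]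
  grind

theorem pair_sublist_dedup_iff [DecidableEq α] {a b : α} {l : List α} :
    [a, b] <+ l.dedup ↔ ∃ l₁ l₂, l = l₁ ++ a :: l₂ ∧ b ∈ l₂ ∧ a ∉ l₂ := by
  induction l with
  | nil => simp
  | cons x l ih =>
    rw [exists_cons_eq_append_cons_iff, ← ih]
    by_cases hx : x ∈ l
    · rw [dedup_cons_of_mem hx]
      grind
    · rw [dedup_cons_of_notMem hx, pair_sublist_cons_iff, mem_dedup]
      grind

end List

open List

lemma stalTableau_cons {n : ℕ} (x : Fin n) (w : List (Fin n)) :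
    stalTableau (x :: w) = stalInsert (stalTableau w) x := by
  simp [stalTableau]

lemma stalTableau_eq_map_dedup {n : ℕ} (w : List (Fin n)) :
    stalTableau w = w.dedup.map fun a => (a, w.count a) := by
  induction w with
  | nil => rfl
  | cons x w ih =>
    rw [stalTableau_cons, ih, stalInsert]
    by_cases hx : x ∈ w
    · rw [if_pos (by simpa using hx), dedup_cons_of_mem hx, map_map]
      refine map_congr_left fun a _ => ?_
      grind
    · rw [if_neg (by simpa using hx), dedup_cons_of_notMem hx, map_cons, count_cons_self,
        count_eq_zero.mpr hx]
      refine congrArg _ (map_congr_left fun a ha => ?_)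
      grind [mem_dedup]

lemma stalTableau_eq_iff {n : ℕ} (u v : List (Fin n)) :
    stalTableau u = stalTableau v ↔ u.dedup = v.dedup ∧ ∀ x, u.count x = v.count x := by
  simp only [stalTableau_eq_map_dedup]
  constructor
  · intro h
    have hd : u.dedup = v.dedup := by
      simpa [Function.comp_def] using congrArg (map Prod.fst) h
    refine ⟨hd, fun x => ?_⟩
    by_cases hx : x ∈ u
    · rw [hd, map_eq_map_iff] at h
      simpa using h x (hd ▸ mem_dedup.mpr hx)
    · have hxv : x ∉ v := by rwa [← mem_dedup, ← hd, mem_dedup]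
      rw [count_eq_zero.mpr hx, count_eq_zero.mpr hxv]
  · rintro ⟨hd, hc⟩
    simp only [hd, hc]

/-- P_stal(u) = P_stal(v) iff u and v have the same content and
for all i < j the statements S_{i,j}(u) and S_{i,j}(v) are equivalent, where
S_{i,j}(w) says that w factors as w'·i·w'' with j occurring in w'' but not i. -/
theorem stmt_8 (n : ℕ) (u v : List (Fin n)) :
    stalTableau u = stalTableau v ↔
      ((∀ x : Fin n, u.count x = v.count x) ∧
        ∀ i j : Fin n, i < j →
          ((∃ u' u'' : List (Fin n), u = u' ++ i :: u'' ∧ j ∈ u'' ∧ i ∉ u'') ↔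
           (∃ v' v'' : List (Fin n), v = v' ++ i :: v'' ∧ j ∈ v'' ∧ i ∉ v''))) := by
  simp only [stalTableau_eq_iff, ← pair_sublist_dedup_iff]
  constructor
  · rintro ⟨hd, hc⟩
    exact ⟨hc, fun i j _ => by rw [hd]⟩
  · rintro ⟨hc, hpair⟩
    refine ⟨(nodup_dedup u).eq_of_pair_sublist_iff_of_lt (nodup_dedup v) (fun a => ?_) hpair, hc⟩
    rw [mem_dedup, mem_dedup, ← count_pos_iff, ← count_pos_iff, hc]
end

section
/- Every monoid satisfying the identities x² = x and xyx = yx (i.e., every right regular band monoid) satisfies u = v for all pairs of words u, v over a finite alphabet with σ_u = σ_v, where σ_w records for each letter its position in the order of first occurrences when reading w right-to-left. -/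
/-!
In a right regular band `x * w = w` whenever the letter `x` occurs in the word `w`: writing
`w = p x q`, this is `x p x = p x`. Hence deleting every occurrence of a letter except the last
one does not change the value of a word, so every word has the value of its `List.dedup`.
For a letter `x` of `u`, `σ_u x` is the position of `x` in `u.dedup` counted from the right, so
`σ_u = σ_v` together with `supp u = supp v` forces `u.dedup = v.dedup`.
-/

/-- `sigmaW u x` is the number of distinct letters in the shortest suffix of
`u` containing `x` (the rank of `x` in the right-to-left order of first
occurrences). -/
def sigmaW {X : Type*} [DecidableEq X] (u : List X) (x : X) : ℕ :=
  ((u.reverse.take (u.reverse.idxOf x + 1)).dedup).length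

theorem mul_prod_map_of_mem {M X : Type*} [Monoid M] (hM : ∀ a b : M, a * b * a = b * a)
    (φ : X → M) {x : X} {l : List X} (hx : x ∈ l) :
    φ x * (l.map φ).prod = (l.map φ).prod := by
  obtain ⟨s, t, rfl⟩ := List.append_of_mem hx
  simp only [List.map_append, List.map_cons, List.prod_append, List.prod_cons, ← mul_assoc, hM]

theorem prod_map_dedup {M X : Type*} [Monoid M] [DecidableEq X]
    (hM : ∀ a b : M, a * b * a = b * a) (φ : X → M) (l : List X) :
    (l.dedup.map φ).prod = (l.map φ).prod := by
  induction l with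
  | nil => rfl
  | cons x l ih =>
    by_cases hx : x ∈ l
    · rw [List.dedup_cons_of_mem hx, ih, List.map_cons, List.prod_cons,
        mul_prod_map_of_mem hM φ hx]
    · rw [List.dedup_cons_of_notMem hx, List.map_cons, List.map_cons, List.prod_cons,
        List.prod_cons, ih]

theorem List.Nodup.eq_of_idxOf_eq {X : Type*} [DecidableEq X] {l₁ l₂ : List X}
    (h₁ : l₁.Nodup) (h₂ : l₂.Nodup) (hmem : ∀ x, x ∈ l₁ ↔ x ∈ l₂)
    (hidx : ∀ x ∈ l₁, l₁.idxOf x = l₂.idxOf x) : l₁ = l₂ := by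
  have hlen : l₁.length = l₂.length := ((List.perm_ext_iff_of_nodup h₁ h₂).2 hmem).length_eq
  refine List.ext_getElem hlen fun i hi₁ hi₂ => ?_
  have hmem₁ : l₁[i] ∈ l₂ := (hmem _).1 (List.getElem_mem hi₁)
  rw [← List.idxOf_inj hmem₁, ← hidx _ (List.getElem_mem hi₁), h₁.idxOf_getElem,
    h₂.idxOf_getElem]

theorem sigmaW_eq_idxOf_reverse_dedup {X : Type*} [DecidableEq X] {u : List X} {x : X}
    (hx : x ∈ u) : sigmaW u x = u.dedup.reverse.idxOf x + 1 := by
  obtain ⟨s, p, hxs, hu, -⟩ := List.exists_erase_eq (List.mem_reverse.2 hx)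
  have hxs' : x ∉ s.reverse.dedup := by simpa using hxs
  have hsigma : sigmaW u x = s.dedup.length + 1 := by
    rw [sigmaW, hu, List.idxOf_append_of_notMem hxs, List.idxOf_cons_self, Nat.add_zero,
      List.take_length_add_append, List.take_one, List.head?_cons, Option.toList_some,
      ((List.perm_append_singleton x s).dedup).length_eq, List.dedup_cons_of_notMem hxs,
      List.length_cons]
  obtain ⟨t, -, ht⟩ := List.sublist_suffix_of_union p.reverse (x :: s.reverse.dedup)
  have hdedup : u.dedup = t ++ x :: s.reverse.dedup := by
    rw [← List.reverse_reverse u, hu, List.reverse_append, List.reverse_cons,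
      List.append_assoc, List.singleton_append, List.dedup_append,
      List.dedup_cons_of_notMem (by simpa using hxs), ht]
  rw [hsigma, hdedup, List.reverse_append, List.reverse_cons, List.append_assoc,
    List.singleton_append, List.idxOf_append_of_notMem (by simpa using hxs'),
    List.idxOf_cons_self, Nat.add_zero, List.length_reverse, ← List.card_toFinset,
    ← List.card_toFinset, List.toFinset_reverse]

theorem dedup_eq_of_sigmaW_eq {X : Type*} [DecidableEq X] {u v : List X}
    (hsupp : ∀ x : X, x ∈ u ↔ x ∈ v) (hsigma : ∀ x : X, sigmaW u x = sigmaW v x) :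
    u.dedup = v.dedup := by
  refine List.reverse_injective <| List.Nodup.eq_of_idxOf_eq
    (List.nodup_reverse.2 (List.nodup_dedup u)) (List.nodup_reverse.2 (List.nodup_dedup v)) (fun x => by simp [hsupp]) fun x hx => ?_
  have hxu : x ∈ u := by simpa using hx
  have hrank := hsigma x
  rwa [sigmaW_eq_idxOf_reverse_dedup hxu, sigmaW_eq_idxOf_reverse_dedup ((hsupp x).1 hxu),
    Nat.add_right_cancel_iff] at hrank

/-- Every monoid satisfying x² = x and xyx = yx (a right regular
band monoid) satisfies u = v whenever supp(u) = supp(v) and σ_u = σ_v. -/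
theorem stmt_10 {X : Type*} [DecidableEq X] (u v : List X)
    (hsupp : ∀ x : X, x ∈ u ↔ x ∈ v)
    (hsigma : ∀ x : X, sigmaW u x = sigmaW v x) :
    ∀ (M : Type*) [Monoid M],
      (∀ x : M, x * x = x) → (∀ x y : M, x * y * x = y * x) →
      ∀ φ : X → M, (u.map φ).prod = (v.map φ).prod := by
  intro M _ _ hM φ
  rw [← prod_map_dedup hM φ u, ← prod_map_dedup hM φ v, dedup_eq_of_sigmaW_eq hsupp hsigma]
end

section
/- Let S be a commutative unital semiring with a zero and an element α of infinite multiplicative order, and let h_{ij} : ℕ* → 2×2 matrices over S be the homomorphism sending i ↦ I = [[1,1],[0,0]], j ↦ J = [[0,0],[0,1]], each k with i < k < j to the zero matrix K, and all other letters to the identity E. Then for any word w: h_{ij}(w) = E iff w contains no symbol in [i,j]; h_{ij}(w) = I iff w contains i and no other symbol from [i,j]; h_{ij}(w) = J iff w contains j and no other symbol from [i,j]; h_{ij}(w) = L = I·J iff w contains both i and j, no other symbol from [i,j], and no scattered subword ji; and h_{ij}(w) = K otherwise. -/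
/-! The images of the letters are upper triangular `0/1` matrices with `J * I = 0`, so `h_{ij}(w)`
vanishes as soon as `w` contains a letter strictly between `i` and `j` or the scattered subword
`ji`. Otherwise the letters of `w` in `[i, j]` read `i^m j^n`, and since `I` and `J` are idempotent,
`h_{ij}(w)` is `!![if j ∈ w then 0 else 1, if i ∈ w then 1 else 0; 0, if i ∈ w then 0 else 1]`.
This closed form is verified letter by letter and the five cases are read off its entries; the
five matrices are distinct because `1 ≠ 0`, which is what the element `α` of infinite order gives. -/

theorem List.pair_sublist_iff {α : Type*} {a b : α} {w : List α} :
    [a, b].Sublist w ↔ ∃ w₁ w₂ w₃, w = w₁ ++ a :: w₂ ++ b :: w₃ := by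
  constructor
  · rw [List.cons_sublist_iff]
    rintro ⟨r₁, r₂, rfl, ha, hb⟩
    obtain ⟨s, t, rfl⟩ := List.mem_iff_append.1 ha
    obtain ⟨u, v, rfl⟩ := List.mem_iff_append.1 (List.singleton_sublist.1 hb)
    exact ⟨s, t ++ u, v, by simp⟩
  · rintro ⟨w₁, w₂, w₃, rfl⟩
    simp

namespace IntervalWordMatrix

variable {S : Type*} [Semiring S] {i j : ℕ} {w : List ℕ}

def letterMatrix (i j a : ℕ) : Matrix (Fin 2) (Fin 2) S :=
  if a = i then !![1, 1; 0, 0] else if a = j then !![0, 0; 0, 1]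
  else if i < a ∧ a < j then 0 else 1

def Annihilates (i j : ℕ) (w : List ℕ) : Prop :=
  (∃ a ∈ w, i < a ∧ a < j) ∨ [j, i].Sublist w

instance : DecidablePred (Annihilates i j) := fun _ => inferInstanceAs (Decidable (_ ∨ _))

def wordMatrix (i j : ℕ) (w : List ℕ) : Matrix (Fin 2) (Fin 2) S :=
  if Annihilates i j w then 0
  else !![if j ∈ w then 0 else 1, if i ∈ w then 1 else 0; 0, if i ∈ w then 0 else 1]

theorem Annihilates.cons (h : Annihilates i j w) (a : ℕ) : Annihilates i j (a :: w) :=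
  h.imp (fun ⟨b, hb, hib, hbj⟩ => ⟨b, List.mem_cons_of_mem a hb, hib, hbj⟩) (·.cons a)

theorem Annihilates.mem (h : Annihilates i j w) :
    (∃ a ∈ w, i < a ∧ a < j) ∨ (i ∈ w ∧ j ∈ w) :=
  h.imp_right fun h => ⟨h.subset (by simp), h.subset (by simp)⟩

theorem annihilates_cons_left (hij : i ≠ j) : Annihilates i j (i :: w) ↔ Annihilates i j w := by
  simp [Annihilates, List.sublist_cons_iff, hij.symm]

theorem annihilates_cons_right : Annihilates i j (j :: w) ↔ Annihilates i j w ∨ i ∈ w := by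
  simp [Annihilates, List.sublist_cons_iff, or_assoc]

theorem annihilates_cons_of_ne {a : ℕ} (haj : a ≠ j) (hmid : ¬(i < a ∧ a < j)) :
    Annihilates i j (a :: w) ↔ Annihilates i j w := by
  simp [Annihilates, List.sublist_cons_iff, hmid, haj.symm]

theorem letterMatrix_mul_wordMatrix (hij : i ≠ j) (a : ℕ) (w : List ℕ) :
    letterMatrix i j a * wordMatrix i j w = (wordMatrix i j (a :: w) : Matrix (Fin 2) (Fin 2) S) := by
  by_cases hw : Annihilates i j w
  · simp [wordMatrix, hw, hw.cons a]
  by_cases hai : a = i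
  · subst a
    have ha := (annihilates_cons_left hij).not.2 hw
    by_cases hi : i ∈ w <;>
      simp [wordMatrix, letterMatrix, funext_iff, Fin.forall_fin_two, hw, ha, hi, hij.symm]
  by_cases haj : a = j
  · subst a
    by_cases hi : i ∈ w
    · have ha : Annihilates i j (j :: w) := annihilates_cons_right.2 (Or.inr hi)
      simp [wordMatrix, letterMatrix, Fin.forall_fin_two, ← Matrix.ext_iff, hw, ha, hi, hai]
    · have ha : ¬Annihilates i j (j :: w) := by simp [annihilates_cons_right, hw, hi]
      simp [wordMatrix, letterMatrix, funext_iff, Fin.forall_fin_two, hw, ha, hi, hai, Ne.symm hai]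
  by_cases hmid : i < a ∧ a < j
  · have ha : Annihilates i j (a :: w) := Or.inl ⟨a, List.mem_cons_self, hmid⟩
    simp [wordMatrix, letterMatrix, ha, hai, haj, hmid]
  · simp [wordMatrix, letterMatrix, annihilates_cons_of_ne haj hmid, hai, haj, hmid,
      Ne.symm hai, Ne.symm haj]

theorem prod_map_letterMatrix (hij : i ≠ j) (w : List ℕ) :
    (w.map (letterMatrix i j)).prod = (wordMatrix i j w : Matrix (Fin 2) (Fin 2) S) := by
  induction w with
  | nil => simp [wordMatrix, Annihilates, Matrix.one_fin_two]
  | cons a w ih => rw [List.map_cons, List.prod_cons, ih, letterMatrix_mul_wordMatrix hij]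

section Nontrivial
variable [Nontrivial S]

theorem wordMatrix_eq_one_iff (hij : i < j) :
    wordMatrix i j w = (1 : Matrix (Fin 2) (Fin 2) S) ↔ ∀ a ∈ w, ¬(i ≤ a ∧ a ≤ j) := by
  by_cases h : Annihilates i j w
  · rw [wordMatrix, if_pos h]
    have := h.mem
    refine iff_of_false zero_ne_one ?_
    grind
  · rw [wordMatrix, if_neg h]
    simp only [Matrix.one_fin_two, EmbeddingLike.apply_eq_iff_eq, Matrix.vecCons_inj]
    grind [Annihilates, zero_ne_one]

theorem wordMatrix_eq_left_iff (hij : i < j) :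
    wordMatrix i j w = (!![1, 1; 0, 0] : Matrix (Fin 2) (Fin 2) S) ↔
      i ∈ w ∧ ∀ a ∈ w, i ≤ a → a ≤ j → a = i := by
  by_cases h : Annihilates i j w
  · rw [wordMatrix, if_pos h]
    have := h.mem
    refine iff_of_false (by simp [← Matrix.ext_iff, Fin.forall_fin_two]) ?_
    grind
  · rw [wordMatrix, if_neg h]
    simp only [EmbeddingLike.apply_eq_iff_eq, Matrix.vecCons_inj]
    grind [Annihilates, zero_ne_one]

theorem wordMatrix_eq_right_iff (hij : i < j) :
    wordMatrix i j w = (!![0, 0; 0, 1] : Matrix (Fin 2) (Fin 2) S) ↔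
      j ∈ w ∧ ∀ a ∈ w, i ≤ a → a ≤ j → a = j := by
  by_cases h : Annihilates i j w
  · rw [wordMatrix, if_pos h]
    have := h.mem
    refine iff_of_false (by simp [← Matrix.ext_iff, Fin.forall_fin_two]) ?_
    grind
  · rw [wordMatrix, if_neg h]
    simp only [EmbeddingLike.apply_eq_iff_eq, Matrix.vecCons_inj]
    grind [Annihilates, zero_ne_one]

theorem wordMatrix_eq_corner_iff :
    wordMatrix i j w = (!![0, 1; 0, 0] : Matrix (Fin 2) (Fin 2) S) ↔
      i ∈ w ∧ j ∈ w ∧ (∀ a ∈ w, i ≤ a → a ≤ j → a = i ∨ a = j) ∧ ¬[j, i].Sublist w := by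
  by_cases h : Annihilates i j w
  · rw [wordMatrix, if_pos h]
    refine iff_of_false (by simp [← Matrix.ext_iff, Fin.forall_fin_two]) ?_
    grind [Annihilates]
  · rw [wordMatrix, if_neg h]
    simp only [EmbeddingLike.apply_eq_iff_eq, Matrix.vecCons_inj]
    grind [Annihilates, zero_ne_one]

end Nontrivial

theorem wordMatrix_eq_zero_of_ne (h1 : wordMatrix i j w ≠ (1 : Matrix (Fin 2) (Fin 2) S))
    (hI : wordMatrix i j w ≠ (!![1, 1; 0, 0] : Matrix (Fin 2) (Fin 2) S))
    (hJ : wordMatrix i j w ≠ (!![0, 0; 0, 1] : Matrix (Fin 2) (Fin 2) S))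
    (hL : wordMatrix i j w ≠ (!![0, 1; 0, 0] : Matrix (Fin 2) (Fin 2) S)) :
    wordMatrix i j w = (0 : Matrix (Fin 2) (Fin 2) S) := by
  by_cases h : Annihilates i j w
  · exact if_pos h
  · rw [wordMatrix, if_neg h] at h1 hI hJ hL
    by_cases hi : i ∈ w <;> by_cases hj : j ∈ w <;>
      simp [hi, hj, Matrix.one_fin_two] at h1 hI hJ hL

end IntervalWordMatrix

open IntervalWordMatrix in
/-- The characterization of the values of the homomorphism
h_{ij} : ℕ* → UT₂(S), sending i ↦ I, j ↦ J, letters strictly between i and j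
to the zero matrix K, and all other letters to the identity E. -/
theorem stmt_15 (S : Type*) [CommSemiring S] (α : S)
    (hα : ∀ k l : ℕ, α ^ k = α ^ l → k = l)
    (i j : ℕ) (hij : i < j)
    (E I J K L : Matrix (Fin 2) (Fin 2) S)
    (hE : E = 1)
    (hI : I = !![1, 1; 0, 0])
    (hJ : J = !![0, 0; 0, 1])
    (hK : K = J * I)
    (hL : L = I * J)
    (h : List ℕ → Matrix (Fin 2) (Fin 2) S)
    (hh : ∀ w : List ℕ, h w =
      (w.map (fun a =>
        if a = i then I else if a = j then J
        else if i < a ∧ a < j then K else E)).prod) :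
    ∀ w : List ℕ,
      (h w = E ↔ ∀ a ∈ w, ¬(i ≤ a ∧ a ≤ j)) ∧
      (h w = I ↔ i ∈ w ∧ ∀ a ∈ w, i ≤ a → a ≤ j → a = i) ∧
      (h w = J ↔ j ∈ w ∧ ∀ a ∈ w, i ≤ a → a ≤ j → a = j) ∧
      (h w = L ↔ i ∈ w ∧ j ∈ w ∧
        (∀ a ∈ w, i ≤ a → a ≤ j → a = i ∨ a = j) ∧
        ¬∃ w₁ w₂ w₃ : List ℕ, w = w₁ ++ j :: w₂ ++ i :: w₃) ∧
      ((h w ≠ E ∧ h w ≠ I ∧ h w ≠ J ∧ h w ≠ L) → h w = K) := by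
  have : Nontrivial S := ⟨α ^ 0, α ^ 1, fun h => zero_ne_one (hα 0 1 h)⟩
  have hK0 : K = 0 := by simp [hK, hJ, hI, ← Matrix.ext_iff, Fin.forall_fin_two]
  have hL' : L = !![0, 1; 0, 0] := by rw [hL, hI, hJ, Matrix.mul_fin_two]; simp
  intro w
  have hw : h w = wordMatrix i j w := by
    rw [hh, ← prod_map_letterMatrix hij.ne, hE, hI, hJ, hK0]
    rfl
  rw [hw, hE, hI, hJ, hK0, hL', ← List.pair_sublist_iff]
  exact ⟨wordMatrix_eq_one_iff hij, wordMatrix_eq_left_iff hij, wordMatrix_eq_right_iff hij,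
    wordMatrix_eq_corner_iff, fun ⟨h1, hI, hJ, hL⟩ => wordMatrix_eq_zero_of_ne h1 hI hJ hL⟩
end

section
/- Let S be a commutative unital semiring with zero and an element of infinite multiplicative order. The map f_{x,y} : rPS_n → matrices indexed by subsets of [n], defined by [f_{x,y}(s)]_{p,q} = α^i if p·s = q where i is the number of x's added to column y when inserting a word representing s into the single-row tableau p, and 0_S otherwise, is a monoid homomorphism. -/
/-- An rPS-tableau is represented as the list of its columns, left to right,
each column a list of symbols with the bottom entry first.  Inserting `a`:
if `a` is greater than every bottom entry, a new column `[a]` is appended at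
the right; otherwise the leftmost column whose bottom entry is ≥ a is slid up
and `a` is placed at its bottom. -/
def rpsInsert {n : ℕ} [NeZero n] :
    List (List (Fin n)) → Fin n → List (List (Fin n))
  | [], a => [[a]]
  | c :: rest, a => if a ≤ c.headI then (a :: c) :: rest else c :: rpsInsert rest a

/-- Insert a word, left-to-right, into a tableau. -/
def rpsTableau {n : ℕ} [NeZero n] (T : List (List (Fin n))) (w : List (Fin n)) :
    List (List (Fin n)) :=
  w.foldl rpsInsert T

/-- The single-row tableau corresponding to a subset p ⊆ [n]. -/
def rowTableau {n : ℕ} (p : Finset (Fin n)) : List (List (Fin n)) :=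
  (p.sort (· ≤ ·)).map (fun a => [a])

/-- The bottom row of a tableau, as a subset of [n]. -/
def bottomRow {n : ℕ} [NeZero n] (T : List (List (Fin n))) : Finset (Fin n) :=
  (T.map List.headI).toFinset

/-- The number of occurrences of the symbol x in the y-th column of T. -/
def colCount {n : ℕ} (T : List (List (Fin n))) (x : Fin n) (y : Fin n) : ℕ :=
  (T.getD (y : ℕ) []).count x

/-- The matrix (indexed by subsets of [n]) associated to a word w: the entry
(p, q) is α^i if inserting w into the single-row tableau p produces a tableau
with bottom row q, where i is the number of x's added to column y in the
process, and 0 otherwise. -/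
def rpsRep {n : ℕ} [NeZero n] {S : Type*} [CommSemiring S] (α : S)
    (x y : Fin n) (w : List (Fin n)) :
    Matrix (Finset (Fin n)) (Finset (Fin n)) S :=
  Matrix.of fun p q =>
    if bottomRow (rpsTableau (rowTableau p) w) = q then
      α ^ (colCount (rpsTableau (rowTableau p) w) x y - colCount (rowTableau p) x y)
    else 0

/-!
Inserting a letter `a` changes the bottom row by `rowInsert` (the leftmost entry `≥ a` is replaced
by `a`, or `a` is appended), and the column receiving `a` is determined by the bottom row alone.
Hence `f_{x,y}(w)` is the monomial matrix of the action `p ↦ p·w` on bottom rows, with exponents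
satisfying the cocycle rule `i_{uv}(p) = i_u(p) + i_v(p·u)`; this makes `f_{x,y}` multiplicative.

It is well defined on `rPS_n` because inserting `u` into a tableau with strictly increasing bottom
row has the same effect as inserting the column reading word of the tableau of `u`. Appending a
letter `b` to `u` either puts `b` atop some column `c`, and then `b` commutes with the letters of
the later columns, which all land strictly to the right of `c`; or `b` passes `c` and we recurse.
-/

section MonomialMatrix

variable {B S : Type*} [DecidableEq B] [CommSemiring S]

def monomialMatrix (f : B → B) (e : B → ℕ) (α : S) : Matrix B B S :=
  Matrix.of fun p q => if f p = q then α ^ e p else 0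

theorem monomialMatrix_mul [Fintype B] (f g : B → B) (e e' : B → ℕ) (α : S) :
    monomialMatrix f e α * monomialMatrix g e' α =
      monomialMatrix (g ∘ f) (fun p => e p + e' (f p)) α := by
  ext p r
  simp only [monomialMatrix, Matrix.mul_apply, Matrix.of_apply, ite_mul, zero_mul,
    Finset.sum_ite_eq, Finset.mem_univ, if_true, Function.comp_apply]
  split_ifs <;> simp [pow_add]

end MonomialMatrix

section RowInsert

variable {α : Type*} [LinearOrder α]

def rowInsert : List α → α → List α
  | [], a => [a]
  | h :: hs, a => if a ≤ h then a :: hs else h :: rowInsert hs a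

def insertPos : List α → α → ℕ
  | [], _ => 0
  | h :: hs, a => if a ≤ h then 0 else insertPos hs a + 1

theorem mem_rowInsert {hs : List α} {a b : α} (h : b ∈ rowInsert hs a) :
    b = a ∨ b ∈ hs := by
  induction hs with
  | nil => simpa [rowInsert] using h
  | cons c hs ih =>
    unfold rowInsert at h
    split at h
    · rcases List.mem_cons.1 h with h | h
      exacts [Or.inl h, Or.inr (List.mem_cons_of_mem _ h)]
    · rcases List.mem_cons.1 h with rfl | h
      · exact Or.inr List.mem_cons_self
      · exact (ih h).imp_right (List.mem_cons_of_mem _)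

theorem List.Pairwise.rowInsert {hs : List α} (h : hs.Pairwise (· < ·)) (a : α) :
    (_root_.rowInsert hs a).Pairwise (· < ·) := by
  induction hs with
  | nil => simp [_root_.rowInsert]
  | cons c hs ih =>
    rw [List.pairwise_cons] at h
    unfold _root_.rowInsert
    split_ifs with hac
    · exact List.pairwise_cons.2 ⟨fun b hb => hac.trans_lt (h.1 b hb), h.2⟩
    · refine List.pairwise_cons.2 ⟨fun b hb => ?_, ih h.2⟩
      rcases mem_rowInsert hb with rfl | hb
      exacts [not_le.1 hac, h.1 b hb]

theorem List.Pairwise.foldl_rowInsert {hs : List α} (h : hs.Pairwise (· < ·)) (w : List α) :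
    (w.foldl _root_.rowInsert hs).Pairwise (· < ·) := by
  induction w generalizing hs with
  | nil => exact h
  | cons a w ih => exact ih (h.rowInsert a)

variable [DecidableEq α]

def insertionGain (x : α) (y : ℕ) : List α → List α → ℕ
  | _, [] => 0
  | hs, a :: w =>
    (if y = insertPos hs a ∧ a = x then 1 else 0) + insertionGain x y (rowInsert hs a) w

theorem insertionGain_append (x : α) (y : ℕ) (hs u v : List α) :
    insertionGain x y hs (u ++ v) =
      insertionGain x y hs u + insertionGain x y (u.foldl rowInsert hs) v := by
  induction u generalizing hs with
  | nil => simp [insertionGain]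
  | cons a u ih => simp only [List.cons_append, insertionGain, ih, List.foldl_cons, Nat.add_assoc]

def rowAction (w : List α) (p : Finset α) : Finset α :=
  (w.foldl rowInsert (p.sort (· ≤ ·))).toFinset

theorem sort_rowAction (w : List α) (p : Finset α) :
    (rowAction w p).sort (· ≤ ·) = w.foldl rowInsert (p.sort (· ≤ ·)) := by
  have h := (Finset.sortedLT_sort p).pairwise.foldl_rowInsert w
  exact (List.toFinset_sort _ (h.imp ne_of_lt)).2 (h.imp le_of_lt)

theorem rowAction_append (u v : List α) :
    rowAction (u ++ v) = rowAction v ∘ rowAction u := by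
  ext1 p
  rw [Function.comp_apply, rowAction, rowAction, sort_rowAction, List.foldl_append]

theorem insertionGain_sort_append (x : α) (y : ℕ) (u v : List α) (p : Finset α) :
    insertionGain x y (p.sort (· ≤ ·)) (u ++ v) =
      insertionGain x y (p.sort (· ≤ ·)) u +
        insertionGain x y ((rowAction u p).sort (· ≤ ·)) v := by
  rw [insertionGain_append, sort_rowAction]

end RowInsert

section Insertion

variable {n : ℕ} [NeZero n]

theorem rpsTableau_cons (T : List (List (Fin n))) (a : Fin n) (w : List (Fin n)) :
    rpsTableau T (a :: w) = rpsTableau (rpsInsert T a) w := rfl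

theorem rpsTableau_singleton (T : List (List (Fin n))) (a : Fin n) :
    rpsTableau T [a] = rpsInsert T a := rfl

theorem rpsTableau_append (T : List (List (Fin n))) (u v : List (Fin n)) :
    rpsTableau T (u ++ v) = rpsTableau (rpsTableau T u) v :=
  List.foldl_append

def bottomList (T : List (List (Fin n))) : List (Fin n) := T.map List.headI

theorem bottomRow_eq_toFinset (T : List (List (Fin n))) :
    bottomRow T = (bottomList T).toFinset := rfl

theorem bottomList_rowTableau (p : Finset (Fin n)) :
    bottomList (rowTableau p) = p.sort (· ≤ ·) := by
  simp [bottomList, rowTableau, Function.comp_def]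

theorem bottomList_rpsInsert (T : List (List (Fin n))) (a : Fin n) :
    bottomList (rpsInsert T a) = rowInsert (bottomList T) a := by
  induction T with
  | nil => rfl
  | cons c T ih =>
    simp only [rpsInsert, bottomList, rowInsert, List.map_cons] at ih ⊢
    split_ifs <;> simp [ih]

theorem bottomList_rpsTableau (T : List (List (Fin n))) (w : List (Fin n)) :
    bottomList (rpsTableau T w) = w.foldl rowInsert (bottomList T) := by
  induction w generalizing T with
  | nil => rfl
  | cons a w ih => rw [rpsTableau_cons, ih, bottomList_rpsInsert, List.foldl_cons]

theorem getD_rpsInsert (T : List (List (Fin n))) (a : Fin n) (i : ℕ) :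
    (rpsInsert T a).getD i [] =
      if i = insertPos (bottomList T) a then a :: T.getD i [] else T.getD i [] := by
  induction T generalizing i with
  | nil => cases i <;> simp [rpsInsert, insertPos, bottomList]
  | cons c T ih =>
    simp only [rpsInsert, bottomList, insertPos, List.map_cons] at ih ⊢
    split_ifs <;> cases i <;> simp_all

theorem colCount_rpsInsert (T : List (List (Fin n))) (a x y : Fin n) :
    colCount (rpsInsert T a) x y =
      colCount T x y + if (y : ℕ) = insertPos (bottomList T) a ∧ a = x then 1 else 0 := by
  unfold colCount
  rw [getD_rpsInsert]
  split_ifs <;> simp_all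

theorem colCount_rpsTableau (T : List (List (Fin n))) (w : List (Fin n)) (x y : Fin n) :
    colCount (rpsTableau T w) x y = colCount T x y + insertionGain x y (bottomList T) w := by
  induction w generalizing T with
  | nil => rfl
  | cons a w ih =>
    rw [rpsTableau_cons, ih, colCount_rpsInsert, bottomList_rpsInsert, insertionGain,
      Nat.add_assoc]

end Insertion

section Tableau

variable {n : ℕ} [NeZero n]

structure IsTableau (T : List (List (Fin n))) : Prop where
  ne_nil : ∀ c ∈ T, c ≠ []
  column_sorted : ∀ c ∈ T, c.Pairwise (· ≤ ·)
  bottomList_sorted : (bottomList T).Pairwise (· < ·)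

theorem IsTableau.nil : IsTableau ([] : List (List (Fin n))) :=
  ⟨by simp, by simp, List.Pairwise.nil⟩

theorem IsTableau.of_cons {c : List (Fin n)} {T : List (List (Fin n))}
    (h : IsTableau (c :: T)) : IsTableau T :=
  ⟨fun d hd => h.ne_nil d (List.mem_cons_of_mem _ hd),
   fun d hd => h.column_sorted d (List.mem_cons_of_mem _ hd),
   (List.pairwise_cons.1 h.bottomList_sorted).2⟩

theorem headI_le_of_mem {c : List (Fin n)} (hc : c.Pairwise (· ≤ ·)) {b : Fin n}
    (hb : b ∈ c) : c.headI ≤ b := by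
  cases c with
  | nil => simp at hb
  | cons d c =>
    rcases List.mem_cons.1 hb with rfl | hb
    exacts [le_rfl, (List.pairwise_cons.1 hc).1 b hb]

theorem mem_rpsInsert {T : List (List (Fin n))} {a : Fin n} {c : List (Fin n)}
    (h : c ∈ rpsInsert T a) :
    c = [a] ∨ c ∈ T ∨ ∃ d ∈ T, a ≤ d.headI ∧ c = a :: d := by
  induction T with
  | nil => simpa [rpsInsert] using h
  | cons d T ih =>
    unfold rpsInsert at h
    split_ifs at h with had
    · rcases List.mem_cons.1 h with rfl | h
      exacts [Or.inr (Or.inr ⟨d, List.mem_cons_self, had, rfl⟩),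
        Or.inr (Or.inl (List.mem_cons_of_mem _ h))]
    · rcases List.mem_cons.1 h with rfl | h
      · exact Or.inr (Or.inl List.mem_cons_self)
      · rcases ih h with h | h | ⟨e, he, hae, rfl⟩
        exacts [Or.inl h, Or.inr (Or.inl (List.mem_cons_of_mem _ h)),
          Or.inr (Or.inr ⟨e, List.mem_cons_of_mem _ he, hae, rfl⟩)]

theorem IsTableau.rpsInsert {T : List (List (Fin n))} (h : IsTableau T) (a : Fin n) :
    IsTableau (rpsInsert T a) := by
  refine ⟨fun c hc => ?_, fun c hc => ?_, ?_⟩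
  · rcases mem_rpsInsert hc with rfl | hc | ⟨d, -, -, rfl⟩
    exacts [List.cons_ne_nil _ _, h.ne_nil c hc, List.cons_ne_nil _ _]
  · rcases mem_rpsInsert hc with rfl | hc | ⟨d, hd, had, rfl⟩
    · exact List.pairwise_singleton _ _
    · exact h.column_sorted c hc
    · refine List.pairwise_cons.2 ⟨fun b hb => ?_, h.column_sorted d hd⟩
      exact had.trans (headI_le_of_mem (h.column_sorted d hd) hb)
  · rw [bottomList_rpsInsert]
    exact h.bottomList_sorted.rowInsert a

theorem IsTableau.rpsTableau {T : List (List (Fin n))} (h : IsTableau T) (w : List (Fin n)) :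
    IsTableau (rpsTableau T w) := by
  induction w generalizing T with
  | nil => exact h
  | cons a w ih => exact ih (h.rpsInsert a)

theorem rpsInsert_append_of_le {A : List (List (Fin n))} (B : List (List (Fin n))) {a : Fin n}
    (h : ∃ c ∈ A, a ≤ c.headI) : rpsInsert (A ++ B) a = rpsInsert A a ++ B := by
  induction A with
  | nil => simp at h
  | cons c A ih =>
    simp only [List.cons_append, rpsInsert]
    split_ifs with hac
    · rfl
    · obtain ⟨d, hd, had⟩ := h
      rcases List.mem_cons.1 hd with rfl | hd
      · exact absurd had hac
      · rw [ih ⟨d, hd, had⟩, List.cons_append]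

theorem rpsInsert_append_of_lt {A : List (List (Fin n))} (B : List (List (Fin n))) {a : Fin n}
    (h : ∀ c ∈ A, c.headI < a) : rpsInsert (A ++ B) a = A ++ rpsInsert B a := by
  induction A with
  | nil => rfl
  | cons c A ih =>
    rw [List.cons_append, rpsInsert, if_neg (not_le.2 (h c List.mem_cons_self)),
      ih fun d hd => h d (List.mem_cons_of_mem _ hd), List.cons_append]

theorem rpsTableau_append_concat_eq_cons (A B : List (List (Fin n))) (b : Fin n) (w : List (Fin n))
    (hw : ∀ c ∈ A, ∀ e ∈ w, c.headI < e) (hb : ∃ c ∈ A, b ≤ c.headI) :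
    rpsTableau (A ++ B) (w ++ [b]) = rpsTableau (A ++ B) (b :: w) := by
  induction w generalizing B with
  | nil => rfl
  | cons e w ih =>
    have he : ∀ c ∈ A, c.headI < e := fun c hc => hw c hc e List.mem_cons_self
    have hbe : b < e := by
      obtain ⟨d, hd, hbd⟩ := hb
      exact hbd.trans_lt (he d hd)
    have he' : ∀ c ∈ rpsInsert A b, c.headI < e := by
      intro c hc
      rcases mem_rpsInsert hc with rfl | hc | ⟨d, -, -, rfl⟩
      exacts [hbe, he c hc, hbe]
    calc rpsTableau (A ++ B) (e :: w ++ [b])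
        = rpsTableau (A ++ rpsInsert B e) (w ++ [b]) := by
          rw [List.cons_append, rpsTableau_cons, rpsInsert_append_of_lt B he]
      _ = rpsTableau (A ++ rpsInsert B e) (b :: w) :=
          ih _ (fun c hc e' he' => hw c hc e' (List.mem_cons_of_mem _ he'))
      _ = rpsTableau (rpsInsert A b ++ rpsInsert B e) w := by
          rw [rpsTableau_cons, rpsInsert_append_of_le _ hb]
      _ = rpsTableau (A ++ B) (b :: e :: w) := by
          rw [rpsTableau_cons, rpsTableau_cons, rpsInsert_append_of_le _ hb,
            rpsInsert_append_of_lt _ he']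

theorem exists_append_of_mem_bottomList {T : List (List (Fin n))}
    (hT : (bottomList T).Pairwise (· < ·)) {h : Fin n} (hh : h ∈ bottomList T) :
    ∃ A B, T = A ++ B ∧ (∀ c ∈ A, c.headI ≤ h) ∧ ∃ c ∈ A, c.headI = h := by
  induction T with
  | nil => simp [bottomList] at hh
  | cons c T ih =>
    simp only [bottomList, List.map_cons, List.pairwise_cons, List.mem_cons] at hT hh
    rcases hh with hh | hh
    · exact ⟨[c], T, rfl, by simp [hh], c, List.mem_singleton_self c, hh.symm⟩
    · obtain ⟨A, B, rfl, hle, hex⟩ := ih hT.2 hh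
      refine ⟨c :: A, B, rfl, ?_, ?_⟩
      · exact List.forall_mem_cons.2 ⟨(hT.1 h hh).le, hle⟩
      · obtain ⟨d, hd, hdh⟩ := hex
        exact ⟨d, List.mem_cons_of_mem _ hd, hdh⟩

end Tableau

section ReadingWord

variable {n : ℕ} [NeZero n]

/-- Columns left to right, each read from top to bottom. -/
def readingWord {β : Type*} (T : List (List β)) : List β := (T.map List.reverse).flatten

theorem readingWord_cons {β : Type*} (c : List β) (T : List (List β)) :
    readingWord (c :: T) = c.reverse ++ readingWord T := rfl

theorem exists_mem_of_mem_readingWord {β : Type*} {T : List (List β)} {e : β}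
    (h : e ∈ readingWord T) : ∃ c ∈ T, e ∈ c := by
  obtain ⟨l, hl, hel⟩ := List.mem_flatten.1 h
  obtain ⟨c, hc, rfl⟩ := List.mem_map.1 hl
  exact ⟨c, hc, List.mem_reverse.1 hel⟩

theorem mem_bottomList_rpsInsert (T : List (List (Fin n))) (a : Fin n) :
    a ∈ bottomList (rpsInsert T a) := by
  rw [bottomList_rpsInsert]
  induction bottomList T with
  | nil => exact List.mem_singleton_self a
  | cons h hs ih =>
    unfold rowInsert
    split_ifs
    exacts [List.mem_cons_self, List.mem_cons_of_mem _ ih]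

theorem rpsTableau_readingWord_concat {U : List (List (Fin n))} (hU : IsTableau U) (b : Fin n)
    {T : List (List (Fin n))} (hT : (bottomList T).Pairwise (· < ·)) :
    rpsTableau T (readingWord U ++ [b]) = rpsTableau T (readingWord (rpsInsert U b)) := by
  induction U generalizing T with
  | nil => rfl
  | cons c U ih =>
    have hT' : (bottomList (rpsTableau T c.reverse)).Pairwise (· < ·) := by
      rw [bottomList_rpsTableau]
      exact hT.foldl_rowInsert _
    rw [rpsInsert]
    split_ifs with hbc
    · -- after reading `c`, the bottom row splits into the columns weakly left of `c.headI`,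
      -- where `b` lands, and the rest, where all of `readingWord U` lands
      have hc : c.headI ∈ bottomList (rpsTableau T c.reverse) := by
        obtain ⟨d, c, rfl⟩ := List.exists_cons_of_ne_nil (hU.ne_nil _ List.mem_cons_self)
        rw [List.reverse_cons, rpsTableau_append]
        exact mem_bottomList_rpsInsert _ _
      obtain ⟨A, B, hAB, hle, d, hdA, hdc⟩ := exists_append_of_mem_bottomList hT' hc
      have hUA : ∀ d ∈ A, ∀ e ∈ readingWord U, d.headI < e := by
        intro d hd e he
        obtain ⟨col, hcol, hecol⟩ := exists_mem_of_mem_readingWord he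
        have hc_col : c.headI < col.headI :=
          (List.pairwise_cons.1 hU.bottomList_sorted).1 _ (List.mem_map_of_mem hcol)
        exact (hle d hd).trans_lt (hc_col.trans_le
          (headI_le_of_mem (hU.column_sorted col (List.mem_cons_of_mem _ hcol)) hecol))
      rw [readingWord_cons, readingWord_cons, List.append_assoc, rpsTableau_append T c.reverse,
        List.reverse_cons, List.append_assoc, rpsTableau_append T c.reverse, hAB,
        rpsTableau_append_concat_eq_cons A B b _ hUA ⟨d, hdA, hdc ▸ hbc⟩,
        List.singleton_append]
    · rw [readingWord_cons, readingWord_cons, List.append_assoc, rpsTableau_append T c.reverse,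
        rpsTableau_append T c.reverse, ih hU.of_cons hT']

theorem rpsTableau_eq_readingWord (u : List (Fin n)) {T : List (List (Fin n))}
    (hT : (bottomList T).Pairwise (· < ·)) :
    rpsTableau T u = rpsTableau T (readingWord (rpsTableau [] u)) := by
  induction u using List.reverseRecOn with
  | nil => rfl
  | append_singleton u b ih =>
    rw [rpsTableau_append, ih, ← rpsTableau_append,
      rpsTableau_readingWord_concat (IsTableau.nil.rpsTableau u) b hT, rpsTableau_append,
      rpsTableau_singleton]

end ReadingWord

section Representation

variable {n : ℕ} [NeZero n]

theorem rpsTableau_rowTableau_congr {u v : List (Fin n)} (h : rpsTableau [] u = rpsTableau [] v)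
    (p : Finset (Fin n)) : rpsTableau (rowTableau p) u = rpsTableau (rowTableau p) v := by
  have hp : (bottomList (rowTableau p)).Pairwise (· < ·) := by
    rw [bottomList_rowTableau]
    exact (Finset.sortedLT_sort p).pairwise
  rw [rpsTableau_eq_readingWord u hp, rpsTableau_eq_readingWord v hp, h]

theorem rpsRep_nil {S : Type*} [CommSemiring S] (α : S) (x y : Fin n) :
    rpsRep α x y [] = 1 := by
  ext p q
  simp [rpsRep, rpsTableau, bottomRow_eq_toFinset, bottomList_rowTableau, Matrix.one_apply]

theorem rpsRep_eq_monomialMatrix {S : Type*} [CommSemiring S] (α : S) (x y : Fin n)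
    (w : List (Fin n)) :
    rpsRep α x y w =
      monomialMatrix (rowAction w) (fun p => insertionGain x y (p.sort (· ≤ ·)) w) α := by
  ext p q
  simp only [rpsRep, monomialMatrix, Matrix.of_apply, colCount_rpsTableau,
    Nat.add_sub_cancel_left, bottomRow_eq_toFinset, bottomList_rpsTableau,
    bottomList_rowTableau, rowAction]
  -- the sides differ only in the `LE` instance under `Finset.sort` (`Fin` vs `LinearOrder`)
  rfl

theorem rpsRep_append {S : Type*} [CommSemiring S] (α : S) (x y : Fin n) (u v : List (Fin n)) :
    rpsRep α x y (u ++ v) = rpsRep α x y u * rpsRep α x y v := by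
  simp only [rpsRep_eq_monomialMatrix, monomialMatrix_mul, rowAction_append,
    insertionGain_sort_append]

end Representation

theorem stmt_18_general {n : ℕ} [NeZero n] (S : Type*) [CommSemiring S] (α : S)
    (x y : Fin n) :
    (∀ u v : List (Fin n), rpsTableau [] u = rpsTableau [] v →
      rpsRep (S := S) α x y u = rpsRep α x y v) ∧
    rpsRep (S := S) α x y [] = 1 ∧
    (∀ u v : List (Fin n),
      rpsRep (S := S) α x y (u ++ v) = rpsRep α x y u * rpsRep α x y v) := by
  refine ⟨fun u v h => ?_, rpsRep_nil α x y, rpsRep_append α x y⟩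
  ext p q
  simp only [rpsRep, Matrix.of_apply, rpsTableau_rowTableau_congr h p]

/-- The map f_{x,y} = rpsRep is well defined on the right
patience sorting monoid rPS_n (words with equal rPS-tableaux have equal
images) and is a monoid homomorphism. -/
theorem stmt_18 {n : ℕ} [NeZero n] (S : Type*) [CommSemiring S] (α : S)
    (hα : ∀ k l : ℕ, α ^ k = α ^ l → k = l) (x y : Fin n) :
    (∀ u v : List (Fin n), rpsTableau [] u = rpsTableau [] v →
      rpsRep (S := S) α x y u = rpsRep α x y v) ∧
    rpsRep (S := S) α x y [] = 1 ∧
    (∀ u v : List (Fin n),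
      rpsRep (S := S) α x y (u ++ v) = rpsRep α x y u * rpsRep α x y v) :=
  stmt_18_general S α x y
end
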